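/- arXiv:1305.2153 — 3 statements merged into one kernel-verified Lean document; each statement's English description precedes it below -/
import Mathlib

section
/- For every even integer k ≥ 0, the k-th moment of the semicircle distribution equals the Catalan number: ∫_{-2}^{2} x^k · (1/(2π))·√(4 - x²) dx = C(k, k/2)/(k/2 + 1), and for odd k the integral is 0. -/
/-!
For `M n = ∫ x in -r..r, x ^ n * √(r ^ 2 - x ^ 2)`, integrating the derivative of
`x ^ (n + 1) * (r ^ 2 - x ^ 2) ^ (3 / 2)`, which vanishes at `±r`, gives the recurrence
`(n + 4) * M (n + 2) = (n + 1) * r ^ 2 * M n`, and `M 0 = π r ^ 2 / 2` is the area of a half-disc.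
For even indices this is, up to the factor `(r / 2) ^ 2`, the Catalan recurrence
`(n + 2) * catalan (n + 1) = 2 * (2 * n + 1) * catalan n`. Odd moments vanish by symmetry.
-/

open Real intervalIntegral

theorem intervalIntegral.integral_eq_zero_of_odd {E : Type*} [NormedAddCommGroup E]
    [NormedSpace ℝ E] {f : ℝ → E} (hf : f.Odd) (a : ℝ) :
    ∫ x in -a..a, f x = 0 := by
  have h := integral_comp_neg (a := -a) (b := a) f
  rw [neg_neg, integral_congr fun x _ ↦ hf x, integral_neg, neg_eq_iff_add_eq_zero,
    ← two_smul ℝ] at h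
  exact (smul_eq_zero.mp h).resolve_left two_ne_zero

theorem Nat.succ_succ_mul_catalan_succ (n : ℕ) :
    (n + 2) * catalan (n + 1) = 2 * (2 * n + 1) * catalan n := by
  have h := succ_mul_centralBinom_succ n
  rw [← succ_mul_catalan_eq_centralBinom, ← succ_mul_catalan_eq_centralBinom] at h
  apply Nat.eq_of_mul_eq_mul_left n.succ_pos
  linarith

section SemicircleMoments

variable {r : ℝ}

theorem hasDerivAt_pow_mul_sq_sub_sq_mul_sqrt (n : ℕ) {x : ℝ} (hx : x ^ 2 < r ^ 2) :
    HasDerivAt (fun x ↦ x ^ (n + 1) * ((r ^ 2 - x ^ 2) * √(r ^ 2 - x ^ 2)))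
      ((n + 1) * r ^ 2 * (x ^ n * √(r ^ 2 - x ^ 2))
        - (n + 4) * (x ^ (n + 2) * √(r ^ 2 - x ^ 2))) x := by
  have hpos : 0 < r ^ 2 - x ^ 2 := sub_pos.mpr hx
  have hsq : HasDerivAt (fun x ↦ r ^ 2 - x ^ 2) (-(2 * x)) x := by
    simpa using (hasDerivAt_pow 2 x).const_sub (r ^ 2)
  have hsqrt : HasDerivAt (fun x ↦ √(r ^ 2 - x ^ 2)) (1 / (2 * √(r ^ 2 - x ^ 2)) * -(2 * x)) x :=
    (hasDerivAt_sqrt hpos.ne').comp x hsq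
  have hprod : HasDerivAt (fun x ↦ (r ^ 2 - x ^ 2) * √(r ^ 2 - x ^ 2))
      (-3 * x * √(r ^ 2 - x ^ 2)) x := by
    refine (hsq.mul hsqrt).congr_deriv ?_
    field_simp
    linear_combination x * sq_sqrt hpos.le
  refine ((hasDerivAt_pow (n + 1) x).mul hprod).congr_deriv ?_
  push_cast
  ring

theorem integral_pow_add_two_mul_sqrt_sq_sub_sq (hr : 0 ≤ r) (n : ℕ) :
    (n + 4) * ∫ x in -r..r, x ^ (n + 2) * √(r ^ 2 - x ^ 2)
      = (n + 1) * r ^ 2 * ∫ x in -r..r, x ^ n * √(r ^ 2 - x ^ 2) := by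
  have hint : ∀ m : ℕ,
      IntervalIntegrable (fun x ↦ x ^ m * √(r ^ 2 - x ^ 2)) MeasureTheory.volume (-r) r := fun m ↦
    (by fun_prop : Continuous fun x : ℝ ↦ x ^ m * √(r ^ 2 - x ^ 2)).intervalIntegrable _ _
  have hcont : Continuous fun x : ℝ ↦ x ^ (n + 1) * ((r ^ 2 - x ^ 2) * √(r ^ 2 - x ^ 2)) := by
    fun_prop
  have hftc := integral_eq_sub_of_hasDerivAt_of_le (neg_le_self hr) hcont.continuousOn
    (fun x hx ↦ hasDerivAt_pow_mul_sq_sub_sq_mul_sqrt n (sq_lt_sq' hx.1 hx.2))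
    (((hint n).const_mul _).sub ((hint (n + 2)).const_mul _))
  rw [integral_sub ((hint n).const_mul _) ((hint (n + 2)).const_mul _), integral_const_mul,
    integral_const_mul] at hftc
  simp only [sub_self, sqrt_zero, mul_zero, even_two, Even.neg_pow] at hftc
  linarith

theorem integral_sqrt_sq_sub_sq (hr : 0 ≤ r) : ∫ x in -r..r, √(r ^ 2 - x ^ 2) = π * r ^ 2 / 2 := by
  have hscale : ∀ x, √(r ^ 2 - (r * x) ^ 2) = r * √(1 - x ^ 2) := fun x ↦ by
    rw [show r ^ 2 - (r * x) ^ 2 = r ^ 2 * (1 - x ^ 2) by ring, sqrt_mul (sq_nonneg r),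
      sqrt_sq hr]
  have h := mul_integral_comp_mul_left (a := -1) (b := 1) (c := r)
    (f := fun x ↦ √(r ^ 2 - x ^ 2))
  simp only [hscale, integral_const_mul, integral_sqrt_one_sub_sq, mul_neg, mul_one] at h
  rw [← h]
  ring

theorem integral_pow_two_mul_mul_sqrt_sq_sub_sq (hr : 0 ≤ r) (n : ℕ) :
    ∫ x in -r..r, x ^ (2 * n) * √(r ^ 2 - x ^ 2)
      = π * r ^ 2 / 2 * (r / 2) ^ (2 * n) * catalan n := by
  induction n with
  | zero => simpa using integral_sqrt_sq_sub_sq hr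
  | succ n ih =>
    have hrec := integral_pow_add_two_mul_sqrt_sq_sub_sq hr (2 * n)
    have hcat : ((n : ℝ) + 2) * catalan (n + 1) = 2 * (2 * n + 1) * catalan n := by
      exact_mod_cast Nat.succ_succ_mul_catalan_succ n
    rw [ih, show 2 * n + 2 = 2 * (n + 1) by ring] at hrec
    push_cast at hrec
    apply mul_left_cancel₀ (by positivity : (2 * n + 4 : ℝ) ≠ 0)
    rw [hrec]
    linear_combination -(π * r ^ 2 / 2 * (r / 2) ^ (2 * n) * r ^ 2 / 2) * hcat

end SemicircleMoments

theorem semicircle_moments (k : ℕ) :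
    (Even k →
      ∫ x in (-2:ℝ)..2, x ^ k * (1 / (2 * π) * Real.sqrt (4 - x ^ 2))
        = (Nat.choose k (k / 2) : ℝ) / ((k / 2 : ℕ) + 1)) ∧
    (Odd k →
      ∫ x in (-2:ℝ)..2, x ^ k * (1 / (2 * π) * Real.sqrt (4 - x ^ 2)) = 0) := by
  constructor
  · rintro ⟨n, rfl⟩
    have hmoment := integral_pow_two_mul_mul_sqrt_sq_sub_sq zero_le_two n
    have hcat : ((n : ℝ) + 1) * catalan n = Nat.centralBinom n := by
      exact_mod_cast succ_mul_catalan_eq_centralBinom n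
    simp_rw [← two_mul, Nat.mul_div_cancel_left n two_pos, ← Nat.centralBinom_eq_two_mul_choose,
      ← hcat, mul_left_comm _ (1 / (2 * π)), integral_const_mul,
      show (4 : ℝ) = 2 ^ 2 by norm_num, hmoment]
    field_simp
    ring
  · intro hk
    refine integral_eq_zero_of_odd (fun x ↦ ?_) 2
    simp only [hk.neg_pow, neg_sq, neg_mul]
end

section
/- If two finite nonnegative measures μ and ν on ℝ have equal Stieltjes transforms, g_μ(z) = g_ν(z) for all z with Im z > 0, then μ = ν. -/
open MeasureTheory Complex BoundedContinuousFunction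

/-!
For `y > 0` the imaginary part of `g_μ(x + iy)` is the Poisson integral
`∫ y / ((x - t)² + y²) dμ(t)` of `μ`. Pairing it with a bounded continuous `ψ` and using Fubini
and the substitution `x = t + y u` gives `∫ (∫ ψ(t + y u) / (1 + u²) du) dμ(t)`, which depends
continuously on `y ∈ ℝ` and equals `π ∫ ψ dμ` at `y = 0`. Hence `g_μ` determines all integrals of
bounded continuous functions against `μ`, and these determine the finite measure `μ`.
-/

/-- `π` times the Poisson integral of `ψ` at `t + i y`, written after the substitution
`x = t + y u`, so that it makes sense and is continuous for all real `y`. -/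
noncomputable def poissonSmoothing (ψ : ℝ → ℝ) (y t : ℝ) : ℝ :=
  ∫ u, ψ (t + y * u) * (1 + u ^ 2)⁻¹

lemma im_inv_ofReal_sub (t x y : ℝ) :
    (((t : ℂ) - (x + y * I))⁻¹).im = y / ((x - t) ^ 2 + y ^ 2) := by
  simp only [inv_im, normSq_apply, sub_re, sub_im, add_re, add_im, mul_re, mul_im, ofReal_re,
    ofReal_im, I_re, I_im, mul_zero, mul_one, add_zero, zero_add, sub_self, zero_sub, neg_neg,
    mul_neg, neg_mul]
  ring

lemma integrable_inv_ofReal_sub (μ : Measure ℝ) [IsFiniteMeasure μ] {z : ℂ} (hz : z.im ≠ 0) :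
    Integrable (fun t : ℝ => ((t : ℂ) - z)⁻¹) μ := by
  have hne : ∀ t : ℝ, (t : ℂ) - z ≠ 0 := fun t ht => hz (by simpa using congrArg im ht)
  refine .of_bound (by fun_prop (disch := exact hne _)) |z.im|⁻¹ (ae_of_all _ fun t => ?_)
  rw [norm_inv]
  refine inv_anti₀ (abs_pos.mpr hz) ?_
  simpa using abs_im_le_norm ((t : ℂ) - z)

lemma integral_poissonKernel_eq_im (μ : Measure ℝ) [IsFiniteMeasure μ] (x : ℝ) {y : ℝ}
    (hy : y ≠ 0) :
    ∫ t, y / ((x - t) ^ 2 + y ^ 2) ∂μ = (∫ t, ((t : ℂ) - (x + y * I))⁻¹ ∂μ).im := by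
  have hz : (x + y * I).im ≠ 0 := by simpa using hy
  simp_rw [← im_inv_ofReal_sub]
  exact integral_im (𝕜 := ℂ) (integrable_inv_ofReal_sub μ hz)

section PoissonKernel

variable {y : ℝ}

lemma integral_mul_poissonKernel (ψ : ℝ → ℝ) (hy : 0 < y) (t : ℝ) :
    ∫ x, ψ x * (y / ((x - t) ^ 2 + y ^ 2)) = poissonSmoothing ψ y t := by
  set F : ℝ → ℝ := fun x => ψ x * (y / ((x - t) ^ 2 + y ^ 2))
  have hF : ∀ u, F (t + y * u) = y⁻¹ * (ψ (t + y * u) * (1 + u ^ 2)⁻¹) := fun u => by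
    simp only [F, add_sub_cancel_left]
    field_simp
    ring
  have hsubst : ∫ u, F (t + y * u) = y⁻¹ * ∫ x, F x := by
    rw [Measure.integral_comp_mul_left (fun v => F (t + v)), integral_add_left_eq_self,
      abs_of_pos (inv_pos.mpr hy), smul_eq_mul]
  simp_rw [hF, integral_const_mul] at hsubst
  exact (mul_left_cancel₀ (inv_ne_zero hy.ne') hsubst).symm

lemma integral_poissonKernel (hy : 0 < y) (t : ℝ) :
    ∫ x, y / ((x - t) ^ 2 + y ^ 2) = Real.pi := by
  simpa [poissonSmoothing] using integral_mul_poissonKernel 1 hy t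

lemma integrable_poissonKernel (hy : 0 < y) (t : ℝ) :
    Integrable (fun x : ℝ => y / ((x - t) ^ 2 + y ^ 2)) := by
  have h : (fun x : ℝ => y / ((x - t) ^ 2 + y ^ 2))
      = fun x => y⁻¹ * (1 + ((x - t) * y⁻¹) ^ 2)⁻¹ := by
    funext x
    field_simp
    ring
  rw [h]
  exact ((integrable_inv_one_add_sq.comp_mul_right' (inv_ne_zero hy.ne')).comp_sub_right
    t).const_mul _

lemma integrable_poissonKernel_prod (μ : Measure ℝ) [IsFiniteMeasure μ] (hy : 0 < y) :
    Integrable (fun p : ℝ × ℝ => y / ((p.2 - p.1) ^ 2 + y ^ 2)) (μ.prod volume) := by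
  have hcont : Continuous (fun p : ℝ × ℝ => y / ((p.2 - p.1) ^ 2 + y ^ 2)) :=
    continuous_const.div (by fun_prop) fun p => by positivity
  refine (integrable_prod_iff hcont.aestronglyMeasurable).mpr
    ⟨ae_of_all _ (integrable_poissonKernel hy), (integrable_const Real.pi).congr ?_⟩
  refine ae_of_all _ fun t => ?_
  have hpos : ∀ x, 0 ≤ y / ((x - t) ^ 2 + y ^ 2) := fun x => by positivity
  simp only [Real.norm_of_nonneg (hpos _), integral_poissonKernel hy t]

end PoissonKernel

lemma integral_poissonSmoothing_eq_integral_mul_im (μ : Measure ℝ) [IsFiniteMeasure μ]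
    (ψ : ℝ →ᵇ ℝ) {y : ℝ} (hy : 0 < y) :
    ∫ t, poissonSmoothing ψ y t ∂μ = ∫ x, ψ x * (∫ t, ((t : ℂ) - (x + y * I))⁻¹ ∂μ).im := by
  have hint : Integrable (fun p : ℝ × ℝ => ψ p.2 * (y / ((p.2 - p.1) ^ 2 + y ^ 2)))
      (μ.prod volume) :=
    (integrable_poissonKernel_prod μ hy).bdd_mul (by fun_prop : Continuous _).aestronglyMeasurable
      (ae_of_all _ fun p => ψ.norm_coe_le_norm p.2)
  simp_rw [← integral_mul_poissonKernel ψ hy, ← integral_poissonKernel_eq_im μ _ hy.ne',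
    ← integral_const_mul]
  exact integral_integral_swap hint

section PoissonSmoothing

variable (ψ : ℝ →ᵇ ℝ)

lemma norm_mul_inv_one_add_sq_le (v u : ℝ) : ‖ψ v * (1 + u ^ 2)⁻¹‖ ≤ ‖ψ‖ * (1 + u ^ 2)⁻¹ := by
  rw [norm_mul, Real.norm_of_nonneg (by positivity : (0 : ℝ) ≤ (1 + u ^ 2)⁻¹)]
  gcongr
  exact ψ.norm_coe_le_norm v

lemma continuous_poissonSmoothing : Continuous fun p : ℝ × ℝ => poissonSmoothing ψ p.1 p.2 :=
  continuous_of_dominated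
    (fun _ => (by fun_prop (disch := exact fun _ => by positivity) : Continuous _)
      |>.aestronglyMeasurable)
    (fun _ => ae_of_all _ fun u => norm_mul_inv_one_add_sq_le ψ _ u)
    (integrable_inv_one_add_sq.const_mul _) (ae_of_all _ fun _ => by fun_prop)

lemma norm_poissonSmoothing_le (y t : ℝ) : ‖poissonSmoothing ψ y t‖ ≤ ‖ψ‖ * Real.pi := by
  calc ‖poissonSmoothing ψ y t‖ ≤ ∫ u, ‖ψ‖ * (1 + u ^ 2)⁻¹ :=
        norm_integral_le_of_norm_le (integrable_inv_one_add_sq.const_mul _)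
          (ae_of_all _ fun u => norm_mul_inv_one_add_sq_le ψ _ u)
    _ = ‖ψ‖ * Real.pi := by rw [integral_const_mul, integral_univ_inv_one_add_sq]

lemma poissonSmoothing_zero (t : ℝ) : poissonSmoothing ψ 0 t = Real.pi * ψ t := by
  rw [poissonSmoothing]
  simp only [zero_mul, add_zero]
  rw [integral_const_mul, integral_univ_inv_one_add_sq, mul_comm]

lemma continuous_integral_poissonSmoothing (μ : Measure ℝ) [IsFiniteMeasure μ] :
    Continuous fun y => ∫ t, poissonSmoothing ψ y t ∂μ :=
  continuous_of_dominated
    (fun y => (continuous_poissonSmoothing ψ |>.comp (.prodMk_right y)).aestronglyMeasurable)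
    (fun y => ae_of_all _ (norm_poissonSmoothing_le ψ y)) (integrable_const _)
    (ae_of_all _ fun t => (continuous_poissonSmoothing ψ).comp (.prodMk_left t))

end PoissonSmoothing

theorem stieltjes_transform_injective (μ ν : Measure ℝ)
    [IsFiniteMeasure μ] [IsFiniteMeasure ν]
    (h : ∀ z : ℂ, 0 < z.im →
      (∫ t, ((t : ℂ) - z)⁻¹ ∂μ) = ∫ t, ((t : ℂ) - z)⁻¹ ∂ν) :
    μ = ν := by
  refine ext_of_forall_integral_eq_of_IsFiniteMeasure fun ψ => ?_
  have hsmooth : Set.EqOn (fun y => ∫ t, poissonSmoothing ψ y t ∂μ)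
      (fun y => ∫ t, poissonSmoothing ψ y t ∂ν) (Set.Ioi 0) := fun y (hy : 0 < y) => by
    have hg (x : ℝ) : ∫ t, ((t : ℂ) - (x + y * I))⁻¹ ∂μ = ∫ t, ((t : ℂ) - (x + y * I))⁻¹ ∂ν :=
      h _ (by simpa using hy)
    simp only [integral_poissonSmoothing_eq_integral_mul_im _ ψ hy, hg]
  have hzero := hsmooth.closure (continuous_integral_poissonSmoothing ψ μ)
    (continuous_integral_poissonSmoothing ψ ν) (x := 0) (by simp)
  simpa [poissonSmoothing_zero, integral_const_mul, Real.pi_ne_zero] using hzero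
end

section
/- Hoffman–Wielandt inequality: if A and B are real symmetric N × N matrices with eigenvalues λ₁^A ≤ ... ≤ λ_N^A and λ₁^B ≤ ... ≤ λ_N^B (in nondecreasing order), then ∑_{i=1}^N (λ_i^A − λ_i^B)² ≤ Tr((A − B)²). -/
/-!
Write `A = U diag(λ) Uᵀ` and `B = V diag(μ) Vᵀ` with `U`, `V` orthogonal. Then
`tr (A B) = ∑ᵢⱼ λᵢ μⱼ Wᵢⱼ²` for the orthogonal matrix `W = Uᵀ V`, and `(Wᵢⱼ²)` is doubly stochastic.
By Birkhoff's theorem it is a convex combination of permutation matrices, so the rearrangement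
inequality bounds `tr (A B)` by `∑ᵢ λ↑ᵢ μ↑ᵢ`, the pairing of the sorted eigenvalues. Expanding both
`tr ((A - B)²) = tr A² - 2 tr (A B) + tr B²` and `∑ᵢ (λ↑ᵢ - μ↑ᵢ)²` finishes the proof.
-/

open Matrix Finset

namespace Matrix

variable {n R : Type*} [Fintype n] [DecidableEq n]

lemma dotProduct_mulVec_le_of_monovary [Field R] [LinearOrder R] [IsStrictOrderedRing R]
    {S : Matrix n n R} (hS : S ∈ doublyStochastic R n) {f g : n → R} (hfg : Monovary f g) :
    f ⬝ᵥ (S *ᵥ g) ≤ f ⬝ᵥ g := by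
  obtain ⟨w, hw_nonneg, hw_sum, rfl⟩ := exists_eq_sum_perm_of_mem_doublyStochastic hS
  calc f ⬝ᵥ ((∑ σ, w σ • σ.permMatrix R) *ᵥ g) = ∑ σ, w σ * (f ⬝ᵥ (g ∘ σ)) := by
        simp only [sum_mulVec, dotProduct_sum, smul_mulVec, dotProduct_smul, permMatrix_mulVec,
          smul_eq_mul]
    _ ≤ ∑ σ, w σ * (f ⬝ᵥ g) := by
        gcongr with σ
        · exact hw_nonneg σ
        · exact hfg.sum_mul_comp_perm_le_sum_mul
    _ = f ⬝ᵥ g := by rw [← sum_mul, hw_sum, one_mul]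

lemma dotProduct_mulVec_le_sort_dotProduct_sort [Field R] [LinearOrder R] [IsStrictOrderedRing R]
    {N : ℕ} {S : Matrix (Fin N) (Fin N) R} (hS : S ∈ doublyStochastic R (Fin N))
    (f g : Fin N → R) :
    f ⬝ᵥ (S *ᵥ g) ≤ (f ∘ Tuple.sort f) ⬝ᵥ (g ∘ Tuple.sort g) := by
  set σ := Tuple.sort f
  set τ := Tuple.sort g
  have hS' : S.submatrix σ τ ∈ doublyStochastic R (Fin N) :=
    reindex_mem_doublyStochastic (e₁ := σ.symm) (e₂ := τ.symm) hS
  calc f ⬝ᵥ (S *ᵥ g) = (f ∘ σ) ⬝ᵥ (S.submatrix σ τ *ᵥ (g ∘ τ)) := by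
        rw [submatrix_mulVec_equiv, comp_equiv_dotProduct_comp_equiv, Function.comp_assoc,
          Equiv.self_comp_symm, Function.comp_id]
    _ ≤ _ := dotProduct_mulVec_le_of_monovary hS'
        ((Tuple.monotone_sort f).monovary (Tuple.monotone_sort g))

lemma hadamard_self_mem_doublyStochastic [CommRing R] [LinearOrder R] [IsStrictOrderedRing R]
    [StarRing R] [TrivialStar R] {W : Matrix n n R} (hW : W ∈ unitaryGroup n R) :
    W ⊙ W ∈ doublyStochastic R n := by
  have hrows := congr_fun₂ (mem_unitaryGroup_iff.mp hW)
  have hcols := congr_fun₂ (mem_unitaryGroup_iff'.mp hW)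
  refine mem_doublyStochastic_iff_sum.mpr ⟨fun i j => mul_self_nonneg _, fun i => ?_, fun j => ?_⟩
  · simpa [mul_apply] using hrows i i
  · simpa [mul_apply] using hcols j j

lemma trace_mul_diagonal_transpose_mul [CommRing R] (U V : Matrix n n R) (a b : n → R) :
    trace (U * diagonal a * Uᵀ * (V * diagonal b * Vᵀ)) = a ⬝ᵥ (((Uᵀ * V) ⊙ (Uᵀ * V)) *ᵥ b) := by
  rw [dotProduct_mulVec, dotProduct_vecMul_hadamard, transpose_mul, transpose_mul,
    transpose_transpose, diagonal_transpose]
  simp only [← Matrix.mul_assoc]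
  rw [trace_mul_comm _ U]
  simp only [Matrix.mul_assoc]

namespace IsHermitian

lemma eq_mul_diagonal_mul_transpose {A : Matrix n n ℝ} (hA : A.IsHermitian) :
    A = (hA.eigenvectorUnitary : Matrix n n ℝ) * diagonal hA.eigenvalues *
      (hA.eigenvectorUnitary : Matrix n n ℝ)ᵀ := by
  conv_lhs => rw [hA.spectral_theorem]
  simp [Unitary.conjStarAlgAut_apply, star_eq_conjTranspose]

lemma exists_mem_unitaryGroup_trace_mul_eq {A B : Matrix n n ℝ} (hA : A.IsHermitian)
    (hB : B.IsHermitian) : ∃ W ∈ unitaryGroup n ℝ,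
      trace (A * B) = hA.eigenvalues ⬝ᵥ ((W ⊙ W) *ᵥ hB.eigenvalues) := by
  refine ⟨_, (star hA.eigenvectorUnitary * hB.eigenvectorUnitary).2, ?_⟩
  conv_lhs => rw [hA.eq_mul_diagonal_mul_transpose, hB.eq_mul_diagonal_mul_transpose]
  rw [trace_mul_diagonal_transpose_mul]
  simp [star_eq_conjTranspose]

lemma trace_mul_self {A : Matrix n n ℝ} (hA : A.IsHermitian) :
    trace (A * A) = hA.eigenvalues ⬝ᵥ hA.eigenvalues := by
  conv_lhs => rw [hA.eq_mul_diagonal_mul_transpose]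
  rw [trace_mul_diagonal_transpose_mul, ← conjTranspose_eq_transpose_of_trivial,
    ← star_eq_conjTranspose, Unitary.coe_star_mul_self, hadamard_one, diag_one,
    Pi.one_def, diagonal_one, one_mulVec]

theorem trace_mul_le_sort_dotProduct_sort {N : ℕ} {A B : Matrix (Fin N) (Fin N) ℝ}
    (hA : A.IsHermitian) (hB : B.IsHermitian) :
    trace (A * B) ≤ (hA.eigenvalues ∘ Tuple.sort hA.eigenvalues) ⬝ᵥ
      (hB.eigenvalues ∘ Tuple.sort hB.eigenvalues) := by
  obtain ⟨W, hW, htrace⟩ := hA.exists_mem_unitaryGroup_trace_mul_eq hB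
  exact htrace ▸
    dotProduct_mulVec_le_sort_dotProduct_sort (hadamard_self_mem_doublyStochastic hW) _ _

end IsHermitian

end Matrix

theorem hoffman_wielandt (N : ℕ) (A B : Matrix (Fin N) (Fin N) ℝ)
    (hA : A.IsHermitian) (hB : B.IsHermitian) :
    ∑ i : Fin N,
        ((hA.eigenvalues ∘ Tuple.sort hA.eigenvalues) i
          - (hB.eigenvalues ∘ Tuple.sort hB.eigenvalues) i) ^ 2
      ≤ Matrix.trace ((A - B) * (A - B)) := by
  set a := hA.eigenvalues ∘ Tuple.sort hA.eigenvalues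
  set b := hB.eigenvalues ∘ Tuple.sort hB.eigenvalues
  have ha : a ⬝ᵥ a = trace (A * A) := by
    rw [comp_equiv_dotProduct_comp_equiv, hA.trace_mul_self]
  have hb : b ⬝ᵥ b = trace (B * B) := by
    rw [comp_equiv_dotProduct_comp_equiv, hB.trace_mul_self]
  have hab : trace (A * B) ≤ a ⬝ᵥ b := hA.trace_mul_le_sort_dotProduct_sort hB
  have hsum : ∑ i, (a i - b i) ^ 2 = a ⬝ᵥ a - 2 * (a ⬝ᵥ b) + b ⬝ᵥ b := by
    simp only [dotProduct, ← sq, sub_sq, sum_add_distrib, sum_sub_distrib, mul_sum, mul_assoc]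
  have htrace :
      trace ((A - B) * (A - B)) = trace (A * A) - 2 * trace (A * B) + trace (B * B) := by
    rw [sub_mul, mul_sub, mul_sub, trace_sub, trace_sub, trace_sub, trace_mul_comm B A]
    ring
  rw [hsum, htrace]
  linarith
end
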